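/- Let n ≥ 2 and let A be an ordering of the matrix chain of length n with triplet set A ⊆ {(a,b,c) : 0 ≤ a < b < c ≤ n}. If a dimension index j ∈ {1,...,n−1} appears in exactly t triplets of A, then 1 ≤ t ≤ n−2 or t = n−1, and t = n−1 occurs if and only if A is the fan-out ordering from j. -/
import Mathlib


/-- Full parenthesisations of the subchain `M_{a+1} ⋯ M_c`. -/
inductive Paren : ℕ → ℕ → Type
  | leaf (i : ℕ) : Paren i (i + 1)
  | node {a b c : ℕ} : Paren a b → Paren b c → Paren a c

/-- The set of index triplets of the multiplications of a parenthesisation. -/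
def Paren.triplets : ∀ {a c : ℕ}, Paren a c → Finset (ℕ × ℕ × ℕ)
  | _, _, .leaf _ => ∅
  | _, _, @Paren.node a b c l r => l.triplets ∪ r.triplets ∪ {(a, b, c)}

/-- The triplet set of the fan-out ordering `E_{n,h}`. -/
def fanSet (n h : ℕ) : Finset (ℕ × ℕ × ℕ) :=
  if h = 0 then (Finset.Icc 2 n).image (fun i => (0, i - 1, i))
  else if h = n then (Finset.Icc 1 (n - 1)).image (fun i => (i - 1, i, n))
  else ((Finset.Icc 1 (h - 1)).image fun i => (i - 1, i, h)) ∪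
       ((Finset.Icc (h + 2) n).image fun i => (h, i - 1, i)) ∪ {(0, h, n)}

lemma Paren.lt : ∀ {a c : ℕ}, Paren a c → a < c
  | _, _, .leaf _ => Nat.lt_succ_self _
  | _, _, .node l r => lt_trans l.lt r.lt

lemma Paren.mem_bounds : ∀ {a c : ℕ} (p : Paren a c) {x y z : ℕ},
    (x, y, z) ∈ p.triplets → a ≤ x ∧ x < y ∧ y < z ∧ z ≤ c
  | _, _, .leaf _, x, y, z, h => by simp [Paren.triplets] at h
  | _, _, @Paren.node a b c l r, x, y, z, h => by
    simp only [Paren.triplets, Finset.mem_union, Finset.mem_singleton,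
      Prod.mk.injEq] at h
    have hl := l.lt
    have hr := r.lt
    rcases h with (h | h) | h
    · have := l.mem_bounds h; omega
    · have := r.mem_bounds h; omega
    · omega

lemma Paren.card_triplets : ∀ {a c : ℕ} (p : Paren a c),
    p.triplets.card = c - a - 1
  | _, _, .leaf _ => by simp [Paren.triplets]
  | _, _, @Paren.node a b c l r => by
    have hl := l.lt
    have hr := r.lt
    have hd1 : Disjoint l.triplets r.triplets := by
      rw [Finset.disjoint_left]
      rintro ⟨x, y, z⟩ h1 h2
      have := l.mem_bounds h1
      have := r.mem_bounds h2
      omega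
    have hd2 : Disjoint (l.triplets ∪ r.triplets) ({(a, b, c)} : Finset _) := by
      rw [Finset.disjoint_right]
      rintro ⟨x, y, z⟩ h1 h2
      simp only [Finset.mem_singleton, Prod.mk.injEq] at h1
      obtain ⟨rfl, rfl, rfl⟩ := h1
      rcases Finset.mem_union.1 h2 with h | h
      · have := l.mem_bounds h; omega
      · have := r.mem_bounds h; omega
    show (l.triplets ∪ r.triplets ∪ {(a, b, c)}).card = c - a - 1
    rw [Finset.card_union_of_disjoint hd2, Finset.card_union_of_disjoint hd1,
      l.card_triplets, r.card_triplets]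
    simp
    omega

lemma Paren.exists_mem : ∀ {a c : ℕ} (p : Paren a c) {j : ℕ}, a < j → j < c →
    ∃ tr ∈ p.triplets, tr.1 = j ∨ tr.2.1 = j ∨ tr.2.2 = j
  | _, _, .leaf i, j, h1, h2 => by omega
  | _, _, @Paren.node a b c l r, j, h1, h2 => by
    rcases lt_trichotomy j b with h | rfl | h
    · obtain ⟨tr, htr, hp⟩ := l.exists_mem h1 h
      exact ⟨tr, by simp [Paren.triplets, Finset.mem_union, htr], hp⟩
    · exact ⟨(a, j, c), by simp [Paren.triplets], by simp⟩
    · obtain ⟨tr, htr, hp⟩ := r.exists_mem h h2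
      exact ⟨tr, by simp [Paren.triplets, Finset.mem_union, htr], hp⟩

/-- Fan from the left endpoint. -/
def leftFan (a c : ℕ) : Finset (ℕ × ℕ × ℕ) :=
  (Finset.Icc (a + 2) c).image (fun i => (a, i - 1, i))

/-- Fan from the right endpoint. -/
def rightFan (a c : ℕ) : Finset (ℕ × ℕ × ℕ) :=
  (Finset.Icc (a + 1) (c - 1)).image (fun i => (i - 1, i, c))

lemma Paren.eq_leftFan {a c : ℕ} (p : Paren a c) :
    (∀ tr ∈ p.triplets, (tr : ℕ × ℕ × ℕ).1 = a) → p.triplets = leftFan a c := by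
  induction p with
  | leaf i =>
    intro _
    rw [leftFan, Finset.Icc_eq_empty (by omega), Finset.image_empty]
    rfl
  | node l r ihl ihr =>
    rename_i a b c
    intro hall
    have hl := l.lt
    have hr := r.lt
    have hre : r.triplets = ∅ := by
      rw [Finset.eq_empty_iff_forall_notMem]
      rintro ⟨x, y, z⟩ h
      have hb := r.mem_bounds h
      have := hall (x, y, z) (by simp [Paren.triplets, Finset.mem_union, h])
      simp at this
      omega
    have hc : c = b + 1 := by
      have := r.card_triplets
      rw [hre] at this
      simp at this
      omega
    subst hc
    have hlf : l.triplets = leftFan a b :=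
      ihl (fun tr htr =>
        hall tr (by simp [Paren.triplets, Finset.mem_union, htr]))
    show l.triplets ∪ r.triplets ∪ {(a, b, b + 1)} = leftFan a (b + 1)
    rw [hre, hlf, Finset.union_empty, leftFan, leftFan,
      show Finset.Icc (a + 2) (b + 1) = insert (b + 1) (Finset.Icc (a + 2) b) by
        ext x; simp [Finset.mem_Icc]; omega,
      Finset.image_insert]
    simp only [Nat.add_sub_cancel]
    rw [Finset.insert_eq, Finset.union_comm]

lemma Paren.eq_rightFan {a c : ℕ} (p : Paren a c) :
    (∀ tr ∈ p.triplets, (tr : ℕ × ℕ × ℕ).2.2 = c) → p.triplets = rightFan a c := by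
  induction p with
  | leaf i =>
    intro _
    rw [rightFan, Finset.Icc_eq_empty (by omega), Finset.image_empty]
    rfl
  | node l r ihl ihr =>
    rename_i a b c
    intro hall
    have hl := l.lt
    have hr := r.lt
    have hle : l.triplets = ∅ := by
      rw [Finset.eq_empty_iff_forall_notMem]
      rintro ⟨x, y, z⟩ h
      have hb := l.mem_bounds h
      have := hall (x, y, z) (by simp [Paren.triplets, Finset.mem_union, h])
      simp at this
      omega
    have hb : b = a + 1 := by
      have := l.card_triplets
      rw [hle] at this
      simp at this
      omega
    subst hb
    have hrf : r.triplets = rightFan (a + 1) c :=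
      ihr (fun tr htr =>
        hall tr (by simp [Paren.triplets, Finset.mem_union, htr]))
    show l.triplets ∪ r.triplets ∪ {(a, a + 1, c)} = rightFan a c
    rw [hle, hrf, Finset.empty_union, rightFan, rightFan,
      show Finset.Icc (a + 1) (c - 1) = insert (a + 1) (Finset.Icc (a + 2) (c - 1)) by
        ext x; simp [Finset.mem_Icc]; omega,
      Finset.image_insert]
    simp only [Nat.add_sub_cancel]
    rw [Finset.insert_eq, Finset.union_comm]

lemma Paren.eq_fan : ∀ {a c : ℕ} (p : Paren a c) {j : ℕ}, a < j → j < c →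
    (∀ tr ∈ p.triplets, (tr : ℕ × ℕ × ℕ).1 = j ∨ tr.2.1 = j ∨ tr.2.2 = j) →
    p.triplets = rightFan a j ∪ leftFan j c ∪ {(a, j, c)}
  | _, _, .leaf i, j, h1, h2, _ => by omega
  | _, _, @Paren.node a b c l r, j, h1, h2, hall => by
    have hl := l.lt
    have hr := r.lt
    have hb : b = j := by
      have := hall (a, b, c) (by simp [Paren.triplets])
      simp at this
      omega
    subst hb
    have hlf : l.triplets = rightFan a b := by
      apply l.eq_rightFan
      rintro ⟨x, y, z⟩ h
      have hbd := l.mem_bounds h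
      have := hall (x, y, z) (by simp [Paren.triplets, Finset.mem_union, h])
      simp at this ⊢
      omega
    have hrf : r.triplets = leftFan b c := by
      apply r.eq_leftFan
      rintro ⟨x, y, z⟩ h
      have hbd := r.mem_bounds h
      have := hall (x, y, z) (by simp [Paren.triplets, Finset.mem_union, h])
      simp at this ⊢
      omega
    show l.triplets ∪ r.triplets ∪ {(a, b, c)} = _
    rw [hlf, hrf]

lemma fanSet_pred {n j : ℕ} (hj1 : 0 < j) (hj2 : j < n) :
    ∀ tr ∈ fanSet n j, (tr : ℕ × ℕ × ℕ).1 = j ∨ tr.2.1 = j ∨ tr.2.2 = j := by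
  rintro ⟨x, y, z⟩ h
  rw [fanSet, if_neg (by omega), if_neg (by omega)] at h
  simp only [Finset.mem_union, Finset.mem_image, Finset.mem_Icc,
    Finset.mem_singleton, Prod.mk.injEq] at h
  rcases h with (⟨i, _, _, _, _⟩ | ⟨i, _, _, _, _⟩) | ⟨_, _, _⟩ <;> simp <;> omega

/-- If an interior dimension index `j` appears in exactly `t` triplets of an
ordering, then `1 ≤ t ≤ n-2` or `t = n-1`, and `t = n-1` holds iff the ordering
is the fan-out ordering from `j`. -/
theorem interior_index_occurrences (n : ℕ) (hn : 2 ≤ n) (j : ℕ)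
    (hj1 : 1 ≤ j) (hj2 : j ≤ n - 1) (p : Paren 0 n) (t : ℕ)
    (ht : t = (p.triplets.filter
      (fun tr => tr.1 = j ∨ tr.2.1 = j ∨ tr.2.2 = j)).card) :
    ((1 ≤ t ∧ t ≤ n - 2) ∨ t = n - 1) ∧
    (t = n - 1 ↔ p.triplets = fanSet n j) := by
  have hjn : j < n := by omega
  have hcard : p.triplets.card = n - 1 := by
    have := p.card_triplets; omega
  have ht2 : t ≤ n - 1 := by
    rw [ht, ← hcard]; exact Finset.card_filter_le _ _
  have ht1 : 1 ≤ t := by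
    rw [ht]
    obtain ⟨tr, htr, hp⟩ := p.exists_mem (j := j) (by omega) hjn
    exact Finset.card_pos.2 ⟨tr, Finset.mem_filter.2 ⟨htr, hp⟩⟩
  refine ⟨by omega, ?_, ?_⟩
  · intro htEq
    have hfe : p.triplets.filter
        (fun tr => tr.1 = j ∨ tr.2.1 = j ∨ tr.2.2 = j) = p.triplets :=
      Finset.eq_of_subset_of_card_le (Finset.filter_subset _ _) (by omega)
    have hall : ∀ tr ∈ p.triplets, (tr : ℕ × ℕ × ℕ).1 = j ∨ tr.2.1 = j ∨ tr.2.2 = j :=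
      fun tr htr => (Finset.mem_filter.1 (hfe ▸ htr : tr ∈ _)).2
    rw [p.eq_fan (by omega) hjn hall, fanSet, if_neg (by omega), if_neg (by omega)]
    rfl
  · intro heq
    rw [ht, Finset.filter_true_of_mem (fun tr htr =>
      fanSet_pred (by omega) hjn tr (heq ▸ htr)), hcard]
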